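/- (Miller) add(E, N) ≤ 𝔡 and cof(E, N) ≥ 𝔟. -/

import Mathlib

open MeasureTheory Set Filter Cardinal

/-- `μ` is the uniform product ("fair coin") probability measure on Cantor space `2^ω`,
characterized by its values on cylinders. -/
def IsFairCoin (μ : Measure (ℕ → Bool)) : Prop :=
  ∀ (s : Finset ℕ) (σ : ℕ → Bool),
    μ {x : ℕ → Bool | ∀ i ∈ s, x i = σ i} = (1 / 2 : ENNReal) ^ s.card

/-- The σ-ideal of μ-null sets. -/
def nullIdeal (μ : Measure (ℕ → Bool)) : Set (Set (ℕ → Bool)) := {A | μ A = 0}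

/-- The σ-ideal of meager subsets of Cantor space. -/
def meagerIdeal : Set (Set (ℕ → Bool)) := {A | IsMeagre A}

/-- The σ-ideal generated by closed measure zero sets. -/
def closedNullIdeal (μ : Measure (ℕ → Bool)) : Set (Set (ℕ → Bool)) :=
  {A | ∃ F : ℕ → Set (ℕ → Bool), (∀ n, IsClosed (F n) ∧ μ (F n) = 0) ∧ A ⊆ ⋃ n, F n}

/-- `add(I, J)`: the least cardinality of a subfamily of `I` whose union is not in `J`. -/
noncomputable def addIJ (I J : Set (Set (ℕ → Bool))) : Cardinal :=
  sInf {c : Cardinal | ∃ A : Set (Set (ℕ → Bool)), A ⊆ I ∧ ⋃₀ A ∉ J ∧ c = #A}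

/-- `cov(J)`: the least cardinality of a subfamily of `J` covering the whole space. -/
noncomputable def covI (J : Set (Set (ℕ → Bool))) : Cardinal :=
  sInf {c : Cardinal | ∃ A : Set (Set (ℕ → Bool)), A ⊆ J ∧ ⋃₀ A = Set.univ ∧ c = #A}

/-- `unif(J)`: the least cardinality of a set of reals not in `J`. -/
noncomputable def unifI (J : Set (Set (ℕ → Bool))) : Cardinal :=
  sInf {c : Cardinal | ∃ X : Set (ℕ → Bool), X ∉ J ∧ c = #X}

/-- `cof(I, J)`: the least cardinality of a subfamily of `J` cofinal over `I`. -/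
noncomputable def cofIJ (I J : Set (Set (ℕ → Bool))) : Cardinal :=
  sInf {c : Cardinal | ∃ A : Set (Set (ℕ → Bool)), A ⊆ J ∧
    (∀ B ∈ I, ∃ C ∈ A, B ⊆ C) ∧ c = #A}

/-- The dominating number 𝔡. -/
noncomputable def frakD : Cardinal :=
  sInf {c : Cardinal | ∃ F : Set (ℕ → ℕ),
    (∀ g : ℕ → ℕ, ∃ f ∈ F, ∀ᶠ n in atTop, g n ≤ f n) ∧ c = #F}

/-- The unbounding number 𝔟. -/
noncomputable def frakB : Cardinal :=
  sInf {c : Cardinal | ∃ F : Set (ℕ → ℕ),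
    (∀ g : ℕ → ℕ, ∃ f ∈ F, ¬ ∀ᶠ n in atTop, f n ≤ g n) ∧ c = #F}


/-!
For `g : ℕ → ℕ` let `a` be the sequence `a 0 = 0`, `a (k+1) = max (a k + 1) (g (a k))`, and let
`ψ g` be the set of `x ∈ 2^ω` vanishing at `a k` for all large `k`: a countable union of closed null
sets. The core is that for every null set `G` there is `φ` with `ψ g ⊄ G` whenever `φ ≤* g`; then
`g ↦ ψ g` and `G ↦ φ` form a Tukey connection between `(ω^ω, ≤*)` and `(E, N, ⊆)`, which yields both
inequalities.

To find `φ`, cover `G` by an open `U` with `μ U < 1/2`, split `U` into its maximal basic cylinders,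
and let `φ p` be a length beyond which these cylinders carry weight at most `4^(-p-1)`. Suppose
`x (a k) = false` for all `k > N` forces `x ∈ U`. Zeroing these coordinates sends every point of
`2^ω` into one of the cylinders, and a cylinder of length `n` pulls back to a set of measure
`2^c · 2^(-n)`, where `c` counts the zeroed coordinates below `n`. A cylinder reaching past the
`k`-th zeroed coordinate `a (N+1+k) ≥ g (a (N+k)) ≥ φ (a (N+k))` has total weight at most `4^(-k-1)`,
which pays for the factor `2^c ≤ 1 + ∑ 2^k`; summing up gives `1 ≤ μ U + 1/2 < 1`.
-/

open scoped ENNReal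

section Tukey

variable {I J : Set (Set (ℕ → Bool))} {ψ : (ℕ → ℕ) → Set (ℕ → Bool)}

theorem addIJ_le_frakD (hψ : ∀ g, ψ g ∈ I)
    (hJ : ∀ C ∈ J, ∃ φ : ℕ → ℕ, ∀ g, (∀ᶠ n in atTop, φ n ≤ g n) → ¬ ψ g ⊆ C) :
    addIJ I J ≤ frakD := by
  choose! Φ hΦ using hJ
  refine le_csInf ⟨_, univ, fun g => ⟨g, mem_univ g, .of_forall fun _ => le_rfl⟩, rfl⟩ ?_
  rintro _ ⟨D, hD, rfl⟩
  have hunion : ⋃₀ (ψ '' D) ∉ J := fun hJ => by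
    obtain ⟨f, hfD, hf⟩ := hD (Φ (⋃₀ (ψ '' D)))
    exact hΦ _ hJ f hf (subset_sUnion_of_mem (mem_image_of_mem ψ hfD))
  calc addIJ I J ≤ #(ψ '' D) := csInf_le' ⟨_, image_subset_iff.2 fun g _ => hψ g, hunion, rfl⟩
    _ ≤ #D := mk_image_le

theorem frakB_le_cofIJ (hIJ : I ⊆ J) (hψ : ∀ g, ψ g ∈ I)
    (hJ : ∀ C ∈ J, ∃ φ : ℕ → ℕ, ∀ g, (∀ᶠ n in atTop, φ n ≤ g n) → ¬ ψ g ⊆ C) :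
    frakB ≤ cofIJ I J := by
  choose! Φ hΦ using hJ
  refine le_csInf ⟨_, J, subset_rfl, fun B hB => ⟨B, hIJ hB, subset_rfl⟩, rfl⟩ ?_
  rintro _ ⟨A, hAJ, hAcof, rfl⟩
  have hunbdd : ∀ g : ℕ → ℕ, ∃ f ∈ Φ '' A, ¬ ∀ᶠ n in atTop, f n ≤ g n := fun g => by
    obtain ⟨C, hCA, hgC⟩ := hAcof (ψ g) (hψ g)
    exact ⟨Φ C, mem_image_of_mem Φ hCA, fun hle => hΦ C (hAJ hCA) g hle hgC⟩
  calc frakB ≤ #(Φ '' A) := csInf_le' ⟨_, hunbdd, rfl⟩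
    _ ≤ #A := mk_image_le

end Tukey

namespace CantorSpace

def cyl (l : List Bool) : Set (ℕ → Bool) := {x | ∀ i (hi : i < l.length), x i = l[i]}

/-- Contains every `x` that lands in `cyl l` once its coordinates in `T` are set to `false`. -/
def cylOff (T : Set ℕ) (l : List Bool) : Set (ℕ → Bool) :=
  {x | ∀ i (hi : i < l.length), i ∉ T → x i = l[i]}

def zeroOn (T : Set ℕ) : Set (ℕ → Bool) := {x | ∀ i ∈ T, x i = false}

def initSeg (x : ℕ → Bool) (n : ℕ) : List Bool := List.ofFn fun i : Fin n => x i

lemma mem_cyl_iff_initSeg_eq {x : ℕ → Bool} {l : List Bool} :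
    x ∈ cyl l ↔ initSeg x l.length = l := by
  simp [cyl, initSeg, List.ext_getElem_iff, eq_comm]

lemma cyl_initSeg (x : ℕ → Bool) (n : ℕ) : cyl (initSeg x n) = PiNat.cylinder x n := by
  ext y; simp [cyl, initSeg]

lemma initSeg_take (x : ℕ → Bool) {m n : ℕ} (h : m ≤ n) :
    (initSeg x n).take m = initSeg x m := by
  rw [initSeg, ← Fin.ofFn_take_eq_take_ofFn h]; rfl

lemma isOpen_cyl (l : List Bool) : IsOpen (cyl l) := by
  have : cyl l = ⋂ i : Fin l.length, (fun x : ℕ → Bool => x i) ⁻¹' {l[i]} := by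
    ext x; simp [cyl, Fin.forall_iff]
  rw [this]
  exact isOpen_iInter_of_finite fun i => (isOpen_discrete _).preimage (continuous_apply _)

lemma isClosed_zeroOn (T : Set ℕ) : IsClosed (zeroOn T) := by
  have : zeroOn T = ⋂ i ∈ T, (fun x : ℕ → Bool => x i) ⁻¹' {false} := by
    ext x; simp [zeroOn]
  rw [this]
  exact isClosed_biInter fun i _ => (isClosed_discrete _).preimage (continuous_apply _)

lemma two_pow_mul_inv_two_pow {c n : ℕ} (h : c ≤ n) :
    (2 : ℝ≥0∞) ^ c * 2⁻¹ ^ n = 2⁻¹ ^ (n - c) := by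
  obtain ⟨r, rfl⟩ := Nat.exists_eq_add_of_le h
  rw [pow_add, ← mul_assoc, ← mul_pow, ENNReal.mul_inv_cancel two_ne_zero ENNReal.ofNat_ne_top,
    one_pow, one_mul, Nat.add_sub_cancel_left]

variable {μ : Measure (ℕ → Bool)}

theorem _root_.IsFairCoin.isProbabilityMeasure (hμ : IsFairCoin μ) : IsProbabilityMeasure μ :=
  ⟨by simpa using hμ ∅ fun _ => false⟩

lemma measure_cylOff (hμ : IsFairCoin μ) (T : Set ℕ) (l : List Bool) [DecidablePred (· ∈ T)] :
    μ (cylOff T l) = 2 ^ ((Finset.range l.length).filter (· ∈ T)).card * 2⁻¹ ^ l.length := by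
  have hset : cylOff T l = {x | ∀ i ∈ (Finset.range l.length).filter (· ∉ T),
      x i = l.getD i false} := by
    ext x
    simp only [cylOff, Finset.mem_filter, Finset.mem_range, and_imp]
    exact forall₂_congr fun i hi => by rw [List.getD_eq_getElem _ _ hi]
  rw [hset, hμ, one_div,
    two_pow_mul_inv_two_pow ((Finset.card_filter_le _ _).trans_eq (Finset.card_range _))]
  congr 1
  have := Finset.card_filter_add_card_filter_not (s := Finset.range l.length) (· ∈ T)
  rw [Finset.card_range] at this
  omega

lemma measure_cyl (hμ : IsFairCoin μ) (l : List Bool) : μ (cyl l) = 2⁻¹ ^ l.length := by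
  classical
  have : cyl l = cylOff ∅ l := by ext x; simp [cyl, cylOff]
  simp [this, measure_cylOff hμ]

lemma measure_zeroOn_of_infinite (hμ : IsFairCoin μ) {T : Set ℕ} (hT : T.Infinite) :
    μ (zeroOn T) = 0 := by
  by_contra hne
  obtain ⟨n, hn⟩ := ENNReal.exists_inv_two_pow_lt hne
  obtain ⟨s, hsT, rfl⟩ := hT.exists_subset_card_eq n
  have hsub : zeroOn T ⊆ {x | ∀ i ∈ s, x i = false} := fun x hx i hi => hx i (hsT hi)
  have := (measure_mono hsub).trans_eq (hμ s fun _ => false)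
  rw [one_div] at this
  exact this.not_gt hn

def maxCyls (U : Set (ℕ → Bool)) : Set (List Bool) :=
  {l | cyl l ⊆ U ∧ ∀ m < l.length, ¬ cyl (l.take m) ⊆ U}

lemma exists_mem_maxCyls {U : Set (ℕ → Bool)} (hU : IsOpen U) {x : ℕ → Bool} (hx : x ∈ U) :
    ∃ l ∈ maxCyls U, x ∈ cyl l := by
  have hex : ∃ n, cyl (initSeg x n) ⊆ U := by
    obtain ⟨_, ⟨y, n, rfl⟩, hxy, hyU⟩ :=
      (PiNat.isTopologicalBasis_cylinders fun _ => Bool).exists_subset_of_mem_open hx hU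
    exact ⟨n, by rwa [cyl_initSeg, PiNat.mem_cylinder_iff_eq.1 hxy]⟩
  obtain ⟨n, hn, hmin⟩ : ∃ n, cyl (initSeg x n) ⊆ U ∧ ∀ m < n, ¬ cyl (initSeg x m) ⊆ U := by
    classical exact ⟨Nat.find hex, Nat.find_spec hex, fun m => Nat.find_min hex⟩
  refine ⟨initSeg x n, ⟨hn, fun m hm => ?_⟩, mem_cyl_iff_initSeg_eq.2 (by simp [initSeg])⟩
  simp only [initSeg, List.length_ofFn] at hm
  rw [initSeg_take x hm.le]
  exact hmin m hm

lemma eq_of_mem_maxCyls_of_length_le {U : Set (ℕ → Bool)} {l l' : List Bool}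
    (hl : l ∈ maxCyls U) (hl' : l' ∈ maxCyls U) (hle : l.length ≤ l'.length) {x : ℕ → Bool}
    (hx : x ∈ cyl l) (hx' : x ∈ cyl l') : l = l' := by
  rw [mem_cyl_iff_initSeg_eq] at hx hx'
  have htake : l'.take l.length = l := by rw [← hx', initSeg_take x hle, hx]
  obtain hlt | heq := hle.lt_or_eq
  · exact absurd (by rw [htake]; exact hl.1) (hl'.2 _ hlt)
  · rw [heq, List.take_length] at htake
    exact htake.symm

lemma pairwiseDisjoint_maxCyls (U : Set (ℕ → Bool)) : (maxCyls U).PairwiseDisjoint cyl := by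
  intro l hl l' hl' hne
  refine Set.disjoint_left.2 fun x hx hx' => hne ?_
  obtain hle | hle := le_total l.length l'.length
  · exact eq_of_mem_maxCyls_of_length_le hl hl' hle hx hx'
  · exact (eq_of_mem_maxCyls_of_length_le hl' hl hle hx' hx).symm

lemma biUnion_maxCyls {U : Set (ℕ → Bool)} (hU : IsOpen U) : ⋃ l ∈ maxCyls U, cyl l = U :=
  (iUnion₂_subset fun _ hl => hl.1).antisymm fun _ hx => by
    obtain ⟨l, hl, hxl⟩ := exists_mem_maxCyls hU hx
    exact mem_biUnion hl hxl

lemma measure_eq_tsum_maxCyls (hμ : IsFairCoin μ) {U : Set (ℕ → Bool)} (hU : IsOpen U) :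
    μ U = ∑' l : maxCyls U, 2⁻¹ ^ l.1.length := by
  conv_lhs => rw [← biUnion_maxCyls hU]
  rw [measure_biUnion (to_countable _) (pairwiseDisjoint_maxCyls U)
    fun l _ => (isOpen_cyl l).measurableSet]
  exact tsum_congr fun l => measure_cyl hμ l

noncomputable def tailMass (U : Set (ℕ → Bool)) (q : ℕ) : ℝ≥0∞ :=
  ∑' l : maxCyls U, if q < l.1.length then 2⁻¹ ^ l.1.length else 0

lemma tailMass_antitone (U : Set (ℕ → Bool)) : Antitone (tailMass U) := fun _ q' hqq' =>
  ENNReal.tsum_le_tsum fun l => by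
    by_cases h : q' < l.1.length
    · rw [if_pos h, if_pos (hqq'.trans_lt h)]
    · rw [if_neg h]
      exact zero_le

lemma exists_tailMass_le {U : Set (ℕ → Bool)} (hU : ∑' l : maxCyls U, 2⁻¹ ^ l.1.length ≠ ∞)
    {ε : ℝ≥0∞} (hε : ε ≠ 0) : ∃ q, tailMass U q ≤ ε := by
  obtain ⟨F, hF⟩ := ((ENNReal.tendsto_tsum_compl_atTop_zero hU).eventually_lt_const
    hε.bot_lt).exists
  refine ⟨F.sup fun l => l.1.length, le_trans ?_ hF.le⟩
  calc tailMass U (F.sup fun l => l.1.length)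
      ≤ ∑' l, {l | l ∉ F}.indicator (fun l : maxCyls U => (2⁻¹ : ℝ≥0∞) ^ l.1.length) l := by
        refine ENNReal.tsum_le_tsum fun l => ?_
        split_ifs with hl
        · have hlF : l ∉ F := fun hmem => (Finset.le_sup (f := fun l => l.1.length) hmem).not_gt hl
          rw [indicator_of_mem hlF]
        · exact zero_le
    _ = _ := (tsum_subtype _ _).symm

lemma exists_mem_maxCyls_cylOff {T : Set ℕ} {U : Set (ℕ → Bool)} (hU : IsOpen U)
    (hT : zeroOn T ⊆ U) (x : ℕ → Bool) : ∃ l ∈ maxCyls U, x ∈ cylOff T l := by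
  classical
  obtain ⟨l, hl, hx'l⟩ := exists_mem_maxCyls hU
    (hT (a := fun i => if i ∈ T then false else x i) fun i hi => if_pos hi)
  exact ⟨l, hl, fun i hi hiT => (if_neg hiT).symm.trans (hx'l i hi)⟩

lemma two_pow_card_le (s : Finset ℕ) : 2 ^ s.card ≤ 1 + ∑ k ∈ s, 2 ^ k := by
  refine Finset.induction_on_max s (by simp) fun a s hlt ih => ?_
  have has : a ∉ s := fun h => (hlt a h).false
  have hcard : s.card ≤ a := by
    simpa using Finset.card_le_card (fun k hk => Finset.mem_range.2 (hlt k hk))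
  rw [Finset.card_insert_of_notMem has, Finset.sum_insert has, pow_succ]
  have := Nat.pow_le_pow_right two_pos hcard
  omega

lemma one_le_tsum_maxCyls (hμ : IsFairCoin μ) {T : Set ℕ} [DecidablePred (· ∈ T)]
    {U : Set (ℕ → Bool)} (hU : IsOpen U) (hT : zeroOn T ⊆ U) :
    (1 : ℝ≥0∞) ≤ ∑' l : maxCyls U,
      2 ^ ((Finset.range l.1.length).filter (· ∈ T)).card * 2⁻¹ ^ l.1.length := by
  have := hμ.isProbabilityMeasure
  have hcover : Set.univ ⊆ ⋃ l : maxCyls U, cylOff T l := fun x _ => by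
    obtain ⟨l, hl, hx⟩ := exists_mem_maxCyls_cylOff hU hT x
    exact mem_iUnion.2 ⟨⟨l, hl⟩, hx⟩
  calc 1 = μ Set.univ := measure_univ.symm
    _ ≤ ∑' l : maxCyls U, μ (cylOff T l) := (measure_mono hcover).trans (measure_iUnion_le _)
    _ = _ := tsum_congr fun l => measure_cylOff hμ T l

lemma two_pow_card_filter_mem_range_le {b : ℕ → ℕ} (hb : StrictMono b) (n : ℕ)
    [DecidablePred (· ∈ range b)] :
    (2 ^ ((Finset.range n).filter (· ∈ range b)).card : ℝ≥0∞)
      ≤ 1 + ∑' k, if b k < n then 2 ^ k else 0 := by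
  set s := (Finset.range n).filter fun k => b k < n
  have hsub : (Finset.range n).filter (· ∈ range b) ⊆ s.image b := by
    intro i hi
    simp only [Finset.mem_filter, Finset.mem_range, mem_range] at hi
    obtain ⟨hin, k, rfl⟩ := hi
    exact Finset.mem_image.2
      ⟨k, Finset.mem_filter.2 ⟨Finset.mem_range.2 ((hb.id_le k).trans_lt hin), hin⟩, rfl⟩
  have hsum : ∑' k, (if b k < n then (2 : ℝ≥0∞) ^ k else 0) = ∑ k ∈ s, 2 ^ k := by
    rw [Finset.sum_filter, tsum_eq_sum]
    intro k hk
    rw [if_neg (fun h => hk (Finset.mem_range.2 ((hb.id_le k).trans_lt h)))]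
  rw [hsum]
  calc (2 ^ ((Finset.range n).filter (· ∈ range b)).card : ℝ≥0∞) ≤ 2 ^ s.card :=
        pow_le_pow_right₀ one_le_two ((Finset.card_le_card hsub).trans Finset.card_image_le)
    _ ≤ 1 + ∑ k ∈ s, 2 ^ k := by exact_mod_cast two_pow_card_le s

theorem one_le_measure_add_tsum_tailMass (hμ : IsFairCoin μ) {U : Set (ℕ → Bool)} (hU : IsOpen U)
    {b : ℕ → ℕ} (hb : StrictMono b) (hT : zeroOn (range b) ⊆ U) :
    (1 : ℝ≥0∞) ≤ μ U + ∑' k, 2 ^ k * tailMass U (b k) := by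
  classical
  calc 1 ≤ ∑' l : maxCyls U,
        2 ^ ((Finset.range l.1.length).filter (· ∈ range b)).card * 2⁻¹ ^ l.1.length :=
        one_le_tsum_maxCyls hμ hU hT
    _ ≤ ∑' l : maxCyls U,
        (1 + ∑' k, if b k < l.1.length then 2 ^ k else 0) * 2⁻¹ ^ l.1.length :=
        ENNReal.tsum_le_tsum fun l => mul_le_mul_left (two_pow_card_filter_mem_range_le hb _) _
    _ = μ U + ∑' k, 2 ^ k * tailMass U (b k) := by
        simp only [add_mul, one_mul, ENNReal.tsum_add, ← measure_eq_tsum_maxCyls hμ hU,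
          ← ENNReal.tsum_mul_right, tailMass, ← ENNReal.tsum_mul_left, ite_mul, zero_mul, mul_ite,
          mul_zero]
        rw [ENNReal.tsum_comm]

def eventuallyZeroAlong (a : ℕ → ℕ) : Set (ℕ → Bool) := {x | ∀ᶠ k in atTop, x (a k) = false}

lemma eventuallyZeroAlong_subset_iUnion (a : ℕ → ℕ) :
    eventuallyZeroAlong a ⊆ ⋃ K, zeroOn (range fun k => a (K + k)) := fun x hx => by
  obtain ⟨K, hK⟩ := eventually_atTop.1 hx
  exact mem_iUnion.2 ⟨K, by rintro _ ⟨k, rfl⟩; exact hK _ (Nat.le_add_right K k)⟩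

lemma zeroOn_range_shift_subset (a : ℕ → ℕ) (K : ℕ) :
    zeroOn (range fun k => a (K + k)) ⊆ eventuallyZeroAlong a := fun x hx =>
  eventually_atTop.2 ⟨K, fun k hk => by
    obtain ⟨j, rfl⟩ := Nat.exists_eq_add_of_le hk
    exact hx _ ⟨j, rfl⟩⟩

lemma eventuallyZeroAlong_mem_closedNullIdeal (hμ : IsFairCoin μ) {a : ℕ → ℕ}
    (ha : Function.Injective a) : eventuallyZeroAlong a ∈ closedNullIdeal μ :=
  ⟨_, fun K => ⟨isClosed_zeroOn _, measure_zeroOn_of_infinite hμ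
    (infinite_range_of_injective (ha.comp (add_right_injective K)))⟩,
    eventuallyZeroAlong_subset_iUnion a⟩

lemma closedNullIdeal_subset_nullIdeal (μ : Measure (ℕ → Bool)) :
    closedNullIdeal μ ⊆ nullIdeal μ := fun _ ⟨_, hF, hA⟩ =>
  measure_mono_null hA (measure_iUnion_null fun n => (hF n).2)

def gapSeq (g : ℕ → ℕ) : ℕ → ℕ
  | 0 => 0
  | k + 1 => max (gapSeq g k + 1) (g (gapSeq g k))

lemma gapSeq_strictMono (g : ℕ → ℕ) : StrictMono (gapSeq g) :=
  strictMono_nat_of_lt_succ fun _ => (Nat.lt_succ_self _).trans_le (le_max_left _ _)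

lemma le_gapSeq_succ (g : ℕ → ℕ) (k : ℕ) : g (gapSeq g k) ≤ gapSeq g (k + 1) := le_max_right _ _

lemma two_pow_mul_tailMass_gapSeq_le {U : Set (ℕ → Bool)} {φ g : ℕ → ℕ}
    (hφ : ∀ p, tailMass U (φ p) ≤ 2⁻¹ ^ (2 * p + 2)) {N : ℕ} (hN : ∀ n ≥ N, φ n ≤ g n) (k : ℕ) :
    2 ^ k * tailMass U (gapSeq g (N + 1 + k)) ≤ 2⁻¹ ^ (k + 2) := by
  have hk : k ≤ gapSeq g (N + k) := (Nat.le_add_left k N).trans ((gapSeq_strictMono g).id_le _)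
  have hφ_le : φ (gapSeq g (N + k)) ≤ gapSeq g (N + 1 + k) :=
    calc φ (gapSeq g (N + k)) ≤ g (gapSeq g (N + k)) :=
          hN _ ((Nat.le_add_right N k).trans ((gapSeq_strictMono g).id_le _))
      _ ≤ gapSeq g (N + k + 1) := le_gapSeq_succ g _
      _ = gapSeq g (N + 1 + k) := by rw [Nat.add_right_comm]
  calc 2 ^ k * tailMass U (gapSeq g (N + 1 + k))
      ≤ 2 ^ k * 2⁻¹ ^ (2 * gapSeq g (N + k) + 2) :=
        mul_le_mul_right ((tailMass_antitone U hφ_le).trans (hφ _)) _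
    _ ≤ 2 ^ k * 2⁻¹ ^ (2 * k + 2) :=
        mul_le_mul_right (pow_le_pow_right_of_le_one' (by norm_num) (by omega)) _
    _ = 2⁻¹ ^ (k + 2) := by rw [two_pow_mul_inv_two_pow (by omega)]; congr 1; omega

theorem exists_not_eventuallyZeroAlong_gapSeq_subset (hμ : IsFairCoin μ) {G : Set (ℕ → Bool)}
    (hG : μ G = 0) :
    ∃ φ : ℕ → ℕ, ∀ g, (∀ᶠ n in atTop, φ n ≤ g n) → ¬ eventuallyZeroAlong (gapSeq g) ⊆ G := by
  have := hμ.isProbabilityMeasure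
  obtain ⟨U, hGU, hU, hUμ⟩ := exists_isOpen_lt_of_lt (μ := μ) G 2⁻¹ (by simp [hG])
  have hfin : ∑' l : maxCyls U, 2⁻¹ ^ l.1.length ≠ ∞ := by
    rw [← measure_eq_tsum_maxCyls hμ hU]
    exact measure_ne_top μ U
  choose φ hφ using fun p => exists_tailMass_le hfin (ε := 2⁻¹ ^ (2 * p + 2)) (by simp)
  refine ⟨φ, fun g hg hsub => ?_⟩
  obtain ⟨N, hN⟩ := eventually_atTop.1 hg
  set b := fun k => gapSeq g (N + 1 + k)
  have hb : StrictMono b := (gapSeq_strictMono g).comp (strictMono_id.const_add _)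
  have hbU : zeroOn (range b) ⊆ U := (zeroOn_range_shift_subset _ _).trans (hsub.trans hGU)
  have htail : ∀ k, 2 ^ k * tailMass U (b k) ≤ 2⁻¹ ^ (k + 2) :=
    two_pow_mul_tailMass_gapSeq_le hφ hN
  have hgeom : ∑' k : ℕ, (2⁻¹ : ℝ≥0∞) ^ (k + 2) = 2⁻¹ := by
    simp only [pow_add, ENNReal.tsum_mul_right, ENNReal.tsum_geometric, ENNReal.one_sub_inv_two,
      inv_inv]
    rw [pow_two, ← mul_assoc, ENNReal.mul_inv_cancel two_ne_zero ENNReal.ofNat_ne_top, one_mul]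
  have := calc (1 : ℝ≥0∞) ≤ μ U + ∑' k, 2 ^ k * tailMass U (b k) :=
        one_le_measure_add_tsum_tailMass hμ hU hb hbU
    _ ≤ μ U + 2⁻¹ := by gcongr; exact (ENNReal.tsum_le_tsum htail).trans_eq hgeom
    _ < 2⁻¹ + 2⁻¹ := ENNReal.add_lt_add_right (by simp) hUμ
    _ = 1 := ENNReal.inv_two_add_inv_two
  exact this.false

end CantorSpace

open CantorSpace

theorem miller_add_le_d_and_cof_ge_b (μ : Measure (ℕ → Bool)) (hμ : IsFairCoin μ) :
    addIJ (closedNullIdeal μ) (nullIdeal μ) ≤ frakD ∧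
    frakB ≤ cofIJ (closedNullIdeal μ) (nullIdeal μ) := by
  have hψ : ∀ g, eventuallyZeroAlong (gapSeq g) ∈ closedNullIdeal μ := fun g =>
    eventuallyZeroAlong_mem_closedNullIdeal hμ (gapSeq_strictMono g).injective
  have hΦ : ∀ G ∈ nullIdeal μ, ∃ φ : ℕ → ℕ,
      ∀ g, (∀ᶠ n in atTop, φ n ≤ g n) → ¬ eventuallyZeroAlong (gapSeq g) ⊆ G :=
    fun _ hG => exists_not_eventuallyZeroAlong_gapSeq_subset hμ hG
  exact ⟨addIJ_le_frakD hψ hΦ, frakB_le_cofIJ (closedNullIdeal_subset_nullIdeal μ) hψ hΦ⟩
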